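/- arXiv:1611.04065 — 2 statements merged into one kernel-verified Lean document; each statement's English description precedes it below -/
import Mathlib

section
/- Let $C_\infty, C_0, C_1$ be chain complexes of modules over a commutative ring of characteristic 2, indexed cyclically by $\mathbb{Z}/3$, and let $f_k : C_k \to C_{k+1}$ be chain maps, $\phi_k : C_k \to C_{k+2}$ and $\psi_k : C_k \to C_k$ be module homomorphisms satisfying: (1) each $f_k$ is a chain map; (2) $f_{k+1} \circ f_k = \partial \circ \phi_k + \phi_k \circ \partial$; (3) $f_{k+2} \circ \phi_k + \phi_{k+1} \circ f_k + \partial \circ \psi_k + \psi_k \circ \partial = \mathrm{id}_{C_k}$. Then for each $k$, the complex $C_k$ is chain homotopy equivalent to the mapping cone of $f_{k+1} : C_{k+1} \to C_{k+2}$. -/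
/-! Chain complexes here are modeled as differential modules `(M, d)` with
`d ∘ d = 0` over a commutative ring of characteristic `2` (signs may be
ignored).  The three complexes `C_∞, C_0, C_1`, cyclically indexed by `ℤ/3`,
are given explicitly as `M₀, M₁, M₂` (identifying `∞` with `2`, so that the
cyclic successor of `M₂` is `M₀`). -/

section ConeTriangle

variable {R : Type*} [CommRing R]

/-- `f` is a chain map from `(X, dX)` to `(Y, dY)`. -/
def IsChainMap {X Y : Type*} [AddCommGroup X] [Module R X] [AddCommGroup Y] [Module R Y]
    (dX : X →ₗ[R] X) (dY : Y →ₗ[R] Y) (f : X →ₗ[R] Y) : Prop :=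
  dY ∘ₗ f = f ∘ₗ dX

/-- The differential of the mapping cone of a chain map
`f : (X, dX) → (Y, dY)`: the underlying module is `X ⊕ Y` (with a degree shift
on `X`) and `∂(a, b) = (∂a, f a + ∂b)` (up to the sign coming from the shift,
which is invisible in characteristic `2`). -/
def coneDiff {X Y : Type*} [AddCommGroup X] [Module R X] [AddCommGroup Y] [Module R Y]
    (dX : X →ₗ[R] X) (dY : Y →ₗ[R] Y) (f : X →ₗ[R] Y) : X × Y →ₗ[R] X × Y :=
  LinearMap.prod (-(dX ∘ₗ LinearMap.fst R X Y))
    (f ∘ₗ LinearMap.fst R X Y + dY ∘ₗ LinearMap.snd R X Y)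

/-- `(X, dX)` and `(Y, dY)` are chain homotopy equivalent: there are chain maps
`G : X → Y` and `G' : Y → X` with `G' ∘ G ≃ id` and `G ∘ G' ≃ id` up to chain
homotopy. -/
def HomotopyEquivalent {X Y : Type*} [AddCommGroup X] [Module R X] [AddCommGroup Y] [Module R Y]
    (dX : X →ₗ[R] X) (dY : Y →ₗ[R] Y) : Prop :=
  ∃ (G : X →ₗ[R] Y) (G' : Y →ₗ[R] X) (h : X →ₗ[R] X) (h' : Y →ₗ[R] Y),
    IsChainMap dX dY G ∧ IsChainMap dY dX G' ∧
    G' ∘ₗ G - LinearMap.id = dX ∘ₗ h + h ∘ₗ dX ∧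
    G ∘ₗ G' - LinearMap.id = dY ∘ₗ h' + h' ∘ₗ dY



theorem aux_cone
    [CharP R 2]
    {X Y Z : Type*}
    [AddCommGroup X] [Module R X] [AddCommGroup Y] [Module R Y]
    [AddCommGroup Z] [Module R Z]
    (dX : X →ₗ[R] X) (dY : Y →ₗ[R] Y) (dZ : Z →ₗ[R] Z)
    (hdX : dX ∘ₗ dX = 0) (hdY : dY ∘ₗ dY = 0) (hdZ : dZ ∘ₗ dZ = 0)
    (f₀ : X →ₗ[R] Y) (f₁ : Y →ₗ[R] Z) (f₂ : Z →ₗ[R] X)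
    (hf₀ : IsChainMap dX dY f₀) (hf₁ : IsChainMap dY dZ f₁)
    (hf₂ : IsChainMap dZ dX f₂)
    (φ₀ : X →ₗ[R] Z) (φ₁ : Y →ₗ[R] X) (φ₂ : Z →ₗ[R] Y)
    (hφ₀ : f₁ ∘ₗ f₀ = dZ ∘ₗ φ₀ + φ₀ ∘ₗ dX)
    (hφ₁ : f₂ ∘ₗ f₁ = dX ∘ₗ φ₁ + φ₁ ∘ₗ dY)
    (hφ₂ : f₀ ∘ₗ f₂ = dY ∘ₗ φ₂ + φ₂ ∘ₗ dZ)
    (ψ₀ : X →ₗ[R] X) (ψ₁ : Y →ₗ[R] Y) (ψ₂ : Z →ₗ[R] Z)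
    (hψ₀ : f₂ ∘ₗ φ₀ + φ₁ ∘ₗ f₀ + dX ∘ₗ ψ₀ + ψ₀ ∘ₗ dX = LinearMap.id)
    (hψ₁ : f₀ ∘ₗ φ₁ + φ₂ ∘ₗ f₁ + dY ∘ₗ ψ₁ + ψ₁ ∘ₗ dY = LinearMap.id)
    (hψ₂ : f₁ ∘ₗ φ₂ + φ₀ ∘ₗ f₂ + dZ ∘ₗ ψ₂ + ψ₂ ∘ₗ dZ = LinearMap.id) :
    HomotopyEquivalent dX (coneDiff dY dZ f₁) := by
  have hR2 : (2:R) = 0 := by exact_mod_cast CharP.cast_eq_zero R 2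
  have hdX' : ∀ v : X, dX (dX v) = 0 := fun v => by
    simpa using LinearMap.congr_fun hdX v
  have hf0' : ∀ v : X, dY (f₀ v) = f₀ (dX v) := fun v => by
    have h := hf₀; unfold IsChainMap at h; simpa using LinearMap.congr_fun h v
  have hf1' : ∀ v : Y, dZ (f₁ v) = f₁ (dY v) := fun v => by
    have h := hf₁; unfold IsChainMap at h; simpa using LinearMap.congr_fun h v
  have hf2' : ∀ v : Z, dX (f₂ v) = f₂ (dZ v) := fun v => by
    have h := hf₂; unfold IsChainMap at h; simpa using LinearMap.congr_fun h v
  have hphi0' : ∀ v : X, f₁ (f₀ v) = dZ (φ₀ v) + φ₀ (dX v) := fun v => by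
    simpa using LinearMap.congr_fun hφ₀ v
  have hphi1' : ∀ v : Y, f₂ (f₁ v) = dX (φ₁ v) + φ₁ (dY v) := fun v => by
    simpa using LinearMap.congr_fun hφ₁ v
  have hphi2' : ∀ v : Z, f₀ (f₂ v) = dY (φ₂ v) + φ₂ (dZ v) := fun v => by
    simpa using LinearMap.congr_fun hφ₂ v
  have hpsi0' : ∀ v : X, f₂ (φ₀ v) + φ₁ (f₀ v) + dX (ψ₀ v) + ψ₀ (dX v) = v := fun v => by
    simpa using LinearMap.congr_fun hψ₀ v
  have hpsi1' : ∀ v : Y, f₀ (φ₁ v) + φ₂ (f₁ v) + dY (ψ₁ v) + ψ₁ (dY v) = v := fun v => by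
    simpa using LinearMap.congr_fun hψ₁ v
  have hpsi2' : ∀ v : Z, f₁ (φ₂ v) + φ₀ (f₂ v) + dZ (ψ₂ v) + ψ₂ (dZ v) = v := fun v => by
    simpa using LinearMap.congr_fun hψ₂ v
  refine ⟨LinearMap.prod f₀ φ₀,
    (φ₁ + f₂ ∘ₗ (φ₀ ∘ₗ φ₁ + f₁ ∘ₗ ψ₁ + ψ₂ ∘ₗ f₁)) ∘ₗ LinearMap.fst R Y Z
      + f₂ ∘ₗ LinearMap.snd R Y Z,
    φ₁ ∘ₗ ψ₁ ∘ₗ f₀ + f₂ ∘ₗ ψ₂ ∘ₗ φ₀ + φ₁ ∘ₗ φ₂ ∘ₗ φ₀ + ψ₀ ∘ₗ dX ∘ₗ ψ₀ + ψ₀ ∘ₗ ψ₀ ∘ₗ dX,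
    LinearMap.prod
      ((ψ₁ + φ₂ ∘ₗ (φ₀ ∘ₗ φ₁ + f₁ ∘ₗ ψ₁ + ψ₂ ∘ₗ f₁)) ∘ₗ LinearMap.fst R Y Z
        + φ₂ ∘ₗ LinearMap.snd R Y Z)
      ((ψ₂ ∘ₗ (φ₀ ∘ₗ φ₁ + f₁ ∘ₗ ψ₁ + ψ₂ ∘ₗ f₁)) ∘ₗ LinearMap.fst R Y Z
        + ψ₂ ∘ₗ LinearMap.snd R Y Z),
    ?_, ?_, ?_, ?_⟩
  · -- chain map G
    refine LinearMap.ext fun x => ?_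
    rw [Prod.ext_iff]
    refine ⟨?_, ?_⟩ <;>
      simp only [coneDiff, LinearMap.comp_apply, LinearMap.prod_apply, Function.prod,
        LinearMap.add_apply, LinearMap.neg_apply, LinearMap.fst_apply, LinearMap.snd_apply,
        map_add, map_neg]
    · -- first component
      have i1 : dY (f₀ x) = f₀ (dX x) := hf0' (x)
      linear_combination (norm := match_scalars <;> (first | ring1 | linear_combination (norm := ring1) (1:R)*hR2 | linear_combination (norm := ring1) (-1:R)*hR2 | linear_combination (norm := ring1) (2:R)*hR2 | linear_combination (norm := ring1) (-2:R)*hR2 | linear_combination (norm := ring1) (3:R)*hR2 | linear_combination (norm := ring1) (-3:R)*hR2)) (1:R) • i1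
    · -- second component
      have i1 : f₁ (f₀ x) = dZ (φ₀ x) + φ₀ (dX x) := hphi0' x
      linear_combination (norm := match_scalars <;> (first | ring1 | linear_combination (norm := ring1) (1:R)*hR2 | linear_combination (norm := ring1) (-1:R)*hR2 | linear_combination (norm := ring1) (2:R)*hR2 | linear_combination (norm := ring1) (-2:R)*hR2 | linear_combination (norm := ring1) (3:R)*hR2 | linear_combination (norm := ring1) (-3:R)*hR2)) (1:R) • i1
  · -- chain map G'
    refine LinearMap.ext fun p => ?_
    obtain ⟨a, b⟩ := p
    simp only [coneDiff, IsChainMap, LinearMap.comp_apply, LinearMap.prod_apply, Function.prod,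
      LinearMap.add_apply, LinearMap.neg_apply, LinearMap.fst_apply, LinearMap.snd_apply,
      map_add, map_neg]
    have i1 : dX (f₂ (φ₀ (φ₁ a))) = f₂ (dZ (φ₀ (φ₁ a))) := hf2' (φ₀ (φ₁ a))
    have i2 : dX (f₂ (f₁ (ψ₁ a))) = f₂ (dZ (f₁ (ψ₁ a))) := hf2' (f₁ (ψ₁ a))
    have i3 : dX (f₂ (ψ₂ (f₁ a))) = f₂ (dZ (ψ₂ (f₁ a))) := hf2' (ψ₂ (f₁ a))
    have i4 : dX (f₂ b) = f₂ (dZ b) := hf2' (b)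
    have i5 : f₂ (f₁ a) = dX (φ₁ a) + φ₁ (dY a) := hphi1' a
    have i6 : f₂ (f₁ (f₀ (φ₁ a))) = f₂ (dZ (φ₀ (φ₁ a))) + f₂ (φ₀ (dX (φ₁ a))) := by rw [hphi0' (φ₁ a)]; simp only [map_add]
    have i7 : f₂ (φ₀ (f₂ (f₁ a))) = f₂ (φ₀ (dX (φ₁ a))) + f₂ (φ₀ (φ₁ (dY a))) := by rw [hphi1' (a)]; simp only [map_add]
    have i8 : f₂ (dZ (f₁ (ψ₁ a))) = f₂ (f₁ (dY (ψ₁ a))) := by rw [hf1' (ψ₁ a)]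
    have i9 : f₂ (f₁ (f₀ (φ₁ a))) + f₂ (f₁ (φ₂ (f₁ a))) + f₂ (f₁ (dY (ψ₁ a))) + f₂ (f₁ (ψ₁ (dY a))) = f₂ (f₁ a) := by simpa only [map_add] using congrArg (fun u => f₂ (f₁ (u))) (hpsi1' (a))
    have i10 : f₂ (f₁ (φ₂ (f₁ a))) + f₂ (φ₀ (f₂ (f₁ a))) + f₂ (dZ (ψ₂ (f₁ a))) + f₂ (ψ₂ (dZ (f₁ a))) = f₂ (f₁ a) := by simpa only [map_add] using congrArg (fun u => f₂ (u)) (hpsi2' (f₁ a))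
    have i11 : f₂ (ψ₂ (dZ (f₁ a))) = f₂ (ψ₂ (f₁ (dY a))) := by rw [hf1' (a)]
    linear_combination (norm := match_scalars <;> (first | ring1 | linear_combination (norm := ring1) (1:R)*hR2 | linear_combination (norm := ring1) (-1:R)*hR2 | linear_combination (norm := ring1) (2:R)*hR2 | linear_combination (norm := ring1) (-2:R)*hR2 | linear_combination (norm := ring1) (3:R)*hR2 | linear_combination (norm := ring1) (-3:R)*hR2)) (1:R) • i1 + (1:R) • i2 + (1:R) • i3 + (1:R) • i4 + (1:R) • i5 + (1:R) • i6 + (1:R) • i7 + (1:R) • i8 + (1:R) • i9 + (1:R) • i10 + (1:R) • i11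
  · -- homotopy on X
    refine LinearMap.ext fun x => ?_
    simp only [LinearMap.sub_apply, LinearMap.comp_apply, LinearMap.prod_apply, Function.prod,
      LinearMap.add_apply, LinearMap.fst_apply, LinearMap.snd_apply, LinearMap.id_apply,
      map_add]
    have i1 : f₂ (φ₀ x) + φ₁ (f₀ x) + dX (ψ₀ x) + ψ₀ (dX x) = x := hpsi0' (x)
    have i2 : f₂ (f₁ (ψ₁ (f₀ x))) = dX (φ₁ (ψ₁ (f₀ x))) + φ₁ (dY (ψ₁ (f₀ x))) := hphi1' (ψ₁ (f₀ x))
    have i3 : φ₁ (f₀ (φ₁ (f₀ x))) + φ₁ (φ₂ (f₁ (f₀ x))) + φ₁ (dY (ψ₁ (f₀ x))) + φ₁ (ψ₁ (dY (f₀ x))) = φ₁ (f₀ x) := by simpa only [map_add] using congrArg (fun u => φ₁ (u)) (hpsi1' (f₀ x))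
    have i4 : φ₁ (ψ₁ (dY (f₀ x))) = φ₁ (ψ₁ (f₀ (dX x))) := by rw [hf0' (x)]
    have i5 : f₂ (ψ₂ (f₁ (f₀ x))) = f₂ (ψ₂ (dZ (φ₀ x))) + f₂ (ψ₂ (φ₀ (dX x))) := by rw [hphi0' (x)]; simp only [map_add]
    have i6 : f₂ (f₁ (φ₂ (φ₀ x))) + f₂ (φ₀ (f₂ (φ₀ x))) + f₂ (dZ (ψ₂ (φ₀ x))) + f₂ (ψ₂ (dZ (φ₀ x))) = f₂ (φ₀ x) := by simpa only [map_add] using congrArg (fun u => f₂ (u)) (hpsi2' (φ₀ x))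
    have i7 : dX (f₂ (ψ₂ (φ₀ x))) = f₂ (dZ (ψ₂ (φ₀ x))) := hf2' (ψ₂ (φ₀ x))
    have i8 : φ₁ (φ₂ (f₁ (f₀ x))) = φ₁ (φ₂ (dZ (φ₀ x))) + φ₁ (φ₂ (φ₀ (dX x))) := by rw [hphi0' (x)]; simp only [map_add]
    have i9 : φ₁ (f₀ (f₂ (φ₀ x))) = φ₁ (dY (φ₂ (φ₀ x))) + φ₁ (φ₂ (dZ (φ₀ x))) := by rw [hphi2' (φ₀ x)]; simp only [map_add]
    have i10 : f₂ (f₁ (φ₂ (φ₀ x))) = dX (φ₁ (φ₂ (φ₀ x))) + φ₁ (dY (φ₂ (φ₀ x))) := hphi1' (φ₂ (φ₀ x))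
    have i11 : f₂ (φ₀ (f₂ (φ₀ x))) + f₂ (φ₀ (φ₁ (f₀ x))) + f₂ (φ₀ (dX (ψ₀ x))) + f₂ (φ₀ (ψ₀ (dX x))) = f₂ (φ₀ x) := by simpa only [map_add] using congrArg (fun u => f₂ (φ₀ (u))) (hpsi0' (x))
    have i12 : φ₁ (f₀ (f₂ (φ₀ x))) + φ₁ (f₀ (φ₁ (f₀ x))) + φ₁ (f₀ (dX (ψ₀ x))) + φ₁ (f₀ (ψ₀ (dX x))) = φ₁ (f₀ x) := by simpa only [map_add] using congrArg (fun u => φ₁ (f₀ (u))) (hpsi0' (x))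
    have i13 : f₂ (φ₀ (dX (ψ₀ x))) + φ₁ (f₀ (dX (ψ₀ x))) + dX (ψ₀ (dX (ψ₀ x))) + ψ₀ (dX (dX (ψ₀ x))) = dX (ψ₀ x) := hpsi0' (dX (ψ₀ x))
    have i14 : f₂ (φ₀ (ψ₀ (dX x))) + φ₁ (f₀ (ψ₀ (dX x))) + dX (ψ₀ (ψ₀ (dX x))) + ψ₀ (dX (ψ₀ (dX x))) = ψ₀ (dX x) := hpsi0' (ψ₀ (dX x))
    have i15 : ψ₀ (dX (dX (ψ₀ x))) = 0 := by rw [hdX' (ψ₀ x), map_zero]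
    have i16 : ψ₀ (ψ₀ (dX (dX x))) = 0 := by rw [hdX' (x), map_zero, map_zero]
    linear_combination (norm := match_scalars <;> (first | ring1 | linear_combination (norm := ring1) (1:R)*hR2 | linear_combination (norm := ring1) (-1:R)*hR2 | linear_combination (norm := ring1) (2:R)*hR2 | linear_combination (norm := ring1) (-2:R)*hR2 | linear_combination (norm := ring1) (3:R)*hR2 | linear_combination (norm := ring1) (-3:R)*hR2)) (1:R) • i1 + (1:R) • i2 + (1:R) • i3 + (1:R) • i4 + (1:R) • i5 + (1:R) • i6 + (1:R) • i7 + (1:R) • i8 + (1:R) • i9 + (1:R) • i10 + (1:R) • i11 + (1:R) • i12 + (1:R) • i13 + (1:R) • i14 + (1:R) • i15 + (1:R) • i16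
  · -- homotopy on the cone
    refine LinearMap.ext fun p => ?_
    obtain ⟨a, b⟩ := p
    rw [Prod.ext_iff]
    refine ⟨?_, ?_⟩ <;>
      simp only [coneDiff, LinearMap.sub_apply, LinearMap.comp_apply, LinearMap.prod_apply,
        Function.prod, LinearMap.add_apply, LinearMap.neg_apply, LinearMap.fst_apply,
        LinearMap.snd_apply, LinearMap.id_apply, map_add, map_neg, Prod.fst_sub, Prod.snd_sub,
        Prod.fst_add, Prod.snd_add]
    · -- first component
      have i1 : f₀ (φ₁ a) + φ₂ (f₁ a) + dY (ψ₁ a) + ψ₁ (dY a) = a := hpsi1' (a)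
      have i2 : f₀ (f₂ (φ₀ (φ₁ a))) = dY (φ₂ (φ₀ (φ₁ a))) + φ₂ (dZ (φ₀ (φ₁ a))) := hphi2' (φ₀ (φ₁ a))
      have i3 : f₀ (f₂ (f₁ (ψ₁ a))) = dY (φ₂ (f₁ (ψ₁ a))) + φ₂ (dZ (f₁ (ψ₁ a))) := hphi2' (f₁ (ψ₁ a))
      have i4 : f₀ (f₂ (ψ₂ (f₁ a))) = dY (φ₂ (ψ₂ (f₁ a))) + φ₂ (dZ (ψ₂ (f₁ a))) := hphi2' (ψ₂ (f₁ a))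
      have i5 : f₀ (f₂ b) = dY (φ₂ b) + φ₂ (dZ b) := hphi2' b
      have i6 : φ₂ (f₁ (f₀ (φ₁ a))) = φ₂ (dZ (φ₀ (φ₁ a))) + φ₂ (φ₀ (dX (φ₁ a))) := by rw [hphi0' (φ₁ a)]; simp only [map_add]
      have i7 : φ₂ (φ₀ (f₂ (f₁ a))) = φ₂ (φ₀ (dX (φ₁ a))) + φ₂ (φ₀ (φ₁ (dY a))) := by rw [hphi1' (a)]; simp only [map_add]
      have i8 : φ₂ (dZ (f₁ (ψ₁ a))) = φ₂ (f₁ (dY (ψ₁ a))) := by rw [hf1' (ψ₁ a)]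
      have i9 : φ₂ (f₁ (f₀ (φ₁ a))) + φ₂ (f₁ (φ₂ (f₁ a))) + φ₂ (f₁ (dY (ψ₁ a))) + φ₂ (f₁ (ψ₁ (dY a))) = φ₂ (f₁ a) := by simpa only [map_add] using congrArg (fun u => φ₂ (f₁ (u))) (hpsi1' (a))
      have i10 : φ₂ (f₁ (φ₂ (f₁ a))) + φ₂ (φ₀ (f₂ (f₁ a))) + φ₂ (dZ (ψ₂ (f₁ a))) + φ₂ (ψ₂ (dZ (f₁ a))) = φ₂ (f₁ a) := by simpa only [map_add] using congrArg (fun u => φ₂ (u)) (hpsi2' (f₁ a))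
      have i11 : φ₂ (ψ₂ (dZ (f₁ a))) = φ₂ (ψ₂ (f₁ (dY a))) := by rw [hf1' (a)]
      linear_combination (norm := match_scalars <;> (first | ring1 | linear_combination (norm := ring1) (1:R)*hR2 | linear_combination (norm := ring1) (-1:R)*hR2 | linear_combination (norm := ring1) (2:R)*hR2 | linear_combination (norm := ring1) (-2:R)*hR2 | linear_combination (norm := ring1) (3:R)*hR2 | linear_combination (norm := ring1) (-3:R)*hR2)) (1:R) • i1 + (1:R) • i2 + (1:R) • i3 + (1:R) • i4 + (1:R) • i5 + (1:R) • i6 + (1:R) • i7 + (1:R) • i8 + (1:R) • i9 + (1:R) • i10 + (1:R) • i11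
    · -- second component
      have i1 : f₁ (φ₂ (φ₀ (φ₁ a))) + φ₀ (f₂ (φ₀ (φ₁ a))) + dZ (ψ₂ (φ₀ (φ₁ a))) + ψ₂ (dZ (φ₀ (φ₁ a))) = φ₀ (φ₁ a) := hpsi2' (φ₀ (φ₁ a))
      have i2 : f₁ (φ₂ (f₁ (ψ₁ a))) + φ₀ (f₂ (f₁ (ψ₁ a))) + dZ (ψ₂ (f₁ (ψ₁ a))) + ψ₂ (dZ (f₁ (ψ₁ a))) = f₁ (ψ₁ a) := hpsi2' (f₁ (ψ₁ a))
      have i3 : f₁ (φ₂ (ψ₂ (f₁ a))) + φ₀ (f₂ (ψ₂ (f₁ a))) + dZ (ψ₂ (ψ₂ (f₁ a))) + ψ₂ (dZ (ψ₂ (f₁ a))) = ψ₂ (f₁ a) := hpsi2' (ψ₂ (f₁ a))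
      have i4 : f₁ (φ₂ b) + φ₀ (f₂ b) + dZ (ψ₂ b) + ψ₂ (dZ b) = b := hpsi2' (b)
      have i5 : ψ₂ (f₁ (f₀ (φ₁ a))) = ψ₂ (dZ (φ₀ (φ₁ a))) + ψ₂ (φ₀ (dX (φ₁ a))) := by rw [hphi0' (φ₁ a)]; simp only [map_add]
      have i6 : ψ₂ (φ₀ (f₂ (f₁ a))) = ψ₂ (φ₀ (dX (φ₁ a))) + ψ₂ (φ₀ (φ₁ (dY a))) := by rw [hphi1' (a)]; simp only [map_add]
      have i7 : ψ₂ (dZ (f₁ (ψ₁ a))) = ψ₂ (f₁ (dY (ψ₁ a))) := by rw [hf1' (ψ₁ a)]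
      have i8 : ψ₂ (f₁ (f₀ (φ₁ a))) + ψ₂ (f₁ (φ₂ (f₁ a))) + ψ₂ (f₁ (dY (ψ₁ a))) + ψ₂ (f₁ (ψ₁ (dY a))) = ψ₂ (f₁ a) := by simpa only [map_add] using congrArg (fun u => ψ₂ (f₁ (u))) (hpsi1' (a))
      have i9 : ψ₂ (f₁ (φ₂ (f₁ a))) + ψ₂ (φ₀ (f₂ (f₁ a))) + ψ₂ (dZ (ψ₂ (f₁ a))) + ψ₂ (ψ₂ (dZ (f₁ a))) = ψ₂ (f₁ a) := by simpa only [map_add] using congrArg (fun u => ψ₂ (u)) (hpsi2' (f₁ a))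
      have i10 : ψ₂ (ψ₂ (dZ (f₁ a))) = ψ₂ (ψ₂ (f₁ (dY a))) := by rw [hf1' (a)]
      linear_combination (norm := match_scalars <;> (first | ring1 | linear_combination (norm := ring1) (1:R)*hR2 | linear_combination (norm := ring1) (-1:R)*hR2 | linear_combination (norm := ring1) (2:R)*hR2 | linear_combination (norm := ring1) (-2:R)*hR2 | linear_combination (norm := ring1) (3:R)*hR2 | linear_combination (norm := ring1) (-3:R)*hR2)) (1:R) • i1 + (1:R) • i2 + (1:R) • i3 + (1:R) • i4 + (1:R) • i5 + (1:R) • i6 + (1:R) • i7 + (1:R) • i8 + (1:R) • i9 + (1:R) • i10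

/-- **The triangle-detection lemma (Lemma 2.1), chain complex version.**
Let `M₀, M₁, M₂` be complexes over a commutative ring of characteristic `2`,
cyclically indexed by `ℤ/3`, with chain maps `f_k : M_k → M_{k+1}`, and module
homomorphisms `φ_k : M_k → M_{k+2}` and `ψ_k : M_k → M_k` satisfying
(1) each `f_k` is a chain map;
(2) `f_{k+1} ∘ f_k = ∂ ∘ φ_k + φ_k ∘ ∂`;
(3) `f_{k+2} ∘ φ_k + φ_{k+1} ∘ f_k + ∂ ∘ ψ_k + ψ_k ∘ ∂ = id`.
Then for each `k`, the complex `M_k` is chain homotopy equivalent to the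
mapping cone of `f_{k+1} : M_{k+1} → M_{k+2}`. -/
theorem homotopy_equivalent_cone_of_triangle
    [CharP R 2]
    {M₀ M₁ M₂ : Type*}
    [AddCommGroup M₀] [Module R M₀] [AddCommGroup M₁] [Module R M₁]
    [AddCommGroup M₂] [Module R M₂]
    (d₀ : M₀ →ₗ[R] M₀) (d₁ : M₁ →ₗ[R] M₁) (d₂ : M₂ →ₗ[R] M₂)
    (hd₀ : d₀ ∘ₗ d₀ = 0) (hd₁ : d₁ ∘ₗ d₁ = 0) (hd₂ : d₂ ∘ₗ d₂ = 0)
    (f₀ : M₀ →ₗ[R] M₁) (f₁ : M₁ →ₗ[R] M₂) (f₂ : M₂ →ₗ[R] M₀)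
    (hf₀ : IsChainMap d₀ d₁ f₀) (hf₁ : IsChainMap d₁ d₂ f₁)
    (hf₂ : IsChainMap d₂ d₀ f₂)
    (φ₀ : M₀ →ₗ[R] M₂) (φ₁ : M₁ →ₗ[R] M₀) (φ₂ : M₂ →ₗ[R] M₁)
    (hφ₀ : f₁ ∘ₗ f₀ = d₂ ∘ₗ φ₀ + φ₀ ∘ₗ d₀)
    (hφ₁ : f₂ ∘ₗ f₁ = d₀ ∘ₗ φ₁ + φ₁ ∘ₗ d₁)
    (hφ₂ : f₀ ∘ₗ f₂ = d₁ ∘ₗ φ₂ + φ₂ ∘ₗ d₂)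
    (ψ₀ : M₀ →ₗ[R] M₀) (ψ₁ : M₁ →ₗ[R] M₁) (ψ₂ : M₂ →ₗ[R] M₂)
    (hψ₀ : f₂ ∘ₗ φ₀ + φ₁ ∘ₗ f₀ + d₀ ∘ₗ ψ₀ + ψ₀ ∘ₗ d₀ = LinearMap.id)
    (hψ₁ : f₀ ∘ₗ φ₁ + φ₂ ∘ₗ f₁ + d₁ ∘ₗ ψ₁ + ψ₁ ∘ₗ d₁ = LinearMap.id)
    (hψ₂ : f₁ ∘ₗ φ₂ + φ₀ ∘ₗ f₂ + d₂ ∘ₗ ψ₂ + ψ₂ ∘ₗ d₂ = LinearMap.id) :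
    HomotopyEquivalent d₀ (coneDiff d₁ d₂ f₁) ∧
    HomotopyEquivalent d₁ (coneDiff d₂ d₀ f₂) ∧
    HomotopyEquivalent d₂ (coneDiff d₀ d₁ f₀) := by
  refine ⟨aux_cone d₀ d₁ d₂ hd₀ hd₁ hd₂ f₀ f₁ f₂ hf₀ hf₁ hf₂ φ₀ φ₁ φ₂ hφ₀ hφ₁ hφ₂
      ψ₀ ψ₁ ψ₂ hψ₀ hψ₁ hψ₂,
    aux_cone d₁ d₂ d₀ hd₁ hd₂ hd₀ f₁ f₂ f₀ hf₁ hf₂ hf₀ φ₁ φ₂ φ₀ hφ₁ hφ₂ hφ₀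
      ψ₁ ψ₂ ψ₀ hψ₁ hψ₂ hψ₀,
    aux_cone d₂ d₀ d₁ hd₂ hd₀ hd₁ f₂ f₀ f₁ hf₂ hf₀ hf₁ φ₂ φ₀ φ₁ hφ₂ hφ₀ hφ₁
      ψ₂ ψ₀ ψ₁ hψ₂ hψ₀ hψ₁⟩

end ConeTriangle
end

section
/- Let $C, D$ be chain complexes over a commutative ring, and let $G : C \to D$ and $G' : D \to C$ be chain maps such that $G' \circ G$ is chain homotopic to $\mathrm{id}_C$. Let $J : D \to D$ be a chain map with $J \circ J = \mathrm{id}_D$ such that $G \circ G'$ is chain homotopic to $J$. Then $G \circ G'$ is chain homotopic to $\mathrm{id}_D$, and hence $G$ is a chain homotopy equivalence. -/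
open CategoryTheory

/-! If `G ≫ G'` is homotopic to the identity, then `e := G' ≫ G` is idempotent up to homotopy:
`e ≃ G' ≫ (G ≫ G') ≫ G = e ≫ e`. An endomorphism that is idempotent up to homotopy and homotopic
to an involution `J` is homotopic to the identity, since `e ≃ e ≫ e ≃ J ≫ J = 𝟙`. -/

namespace Homotopy

variable {ι V : Type*} [Category V] [Preadditive V] {c : ComplexShape ι}
  {C D : HomologicalComplex V c}

def toCompSelf {G : C ⟶ D} {G' : D ⟶ C} (h : Homotopy (G ≫ G') (𝟙 C)) :
    Homotopy (G' ≫ G) ((G' ≫ G) ≫ (G' ≫ G)) :=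
  (ofEq (by simp)).trans (((h.symm.compLeft G').compRight G).trans (ofEq (by simp)))

def toIdOfInvolution {e J : D ⟶ D} (he : Homotopy e (e ≫ e)) (h : Homotopy e J)
    (hJ : J ≫ J = 𝟙 D) : Homotopy e (𝟙 D) :=
  (he.trans (h.comp h)).trans (ofEq hJ)

end Homotopy

/-- **The `J`-trick.**  Let `C, D` be chain complexes over a commutative ring,
`G : C ⟶ D`, `G' : D ⟶ C` chain maps with `G' ∘ G` chain homotopic to `id_C`
(in Mathlib's composition order, `G ≫ G' : C ⟶ C`).  Let `J : D ⟶ D` be a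
chain map with `J ∘ J = id_D` such that `G ∘ G'` (that is, `G' ≫ G : D ⟶ D`)
is chain homotopic to `J`.  Then `G ∘ G'` is chain homotopic to `id_D`, and
hence `G` is a chain homotopy equivalence. -/
theorem homotopy_inverse_of_involution_trick
    (R : Type*) [CommRing R]
    (C D : ChainComplex (ModuleCat R) ℤ)
    (G : C ⟶ D) (G' : D ⟶ C)
    (h₁ : Homotopy (G ≫ G') (𝟙 C))
    (J : D ⟶ D) (hJ : J ≫ J = 𝟙 D)
    (h₂ : Homotopy (G' ≫ G) J) :
    Nonempty (Homotopy (G' ≫ G) (𝟙 D)) ∧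
      ∃ e : HomotopyEquiv C D, e.hom = G := by
  let h : Homotopy (G' ≫ G) (𝟙 D) := h₁.toCompSelf.toIdOfInvolution h₂ hJ
  exact ⟨⟨h⟩, ⟨G, G', h₁, h⟩, rfl⟩
end
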